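/- arXiv:0912.2051 — 4 statements merged into one kernel-verified Lean document; each statement's English description precedes it below -/
import Mathlib

section
/- For any positive integer u and any positive integer n, if ū ∈ {1, ..., p^n − 1} is the unique integer with u ≡ ū (mod p^n − 1), then the p-adic digit sum satisfies s_p(u) ≥ s_p(ū). -/
/-!
Write `u = r + p^n q` with `r < p^n`. The digits of `u` are those of `r`, padded to length `n`,
followed by those of `q`, so `s_p(u) = s_p(r) + s_p(q) ≥ s_p(r + q)`, while `0 < r + q < u` and
`r + q ≡ u` modulo `p^n - 1`. Iterating this folding ends at a number in `[1, p^n - 1]`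
congruent to `ū`, hence equal to it. Subadditivity of `s_p` comes from Legendre's formula
`(p - 1) v_p(m!) = m - s_p(m)` and `a! b! ∣ (a + b)!`.
-/

/-- `sp p n` is the sum of the base-`p` digits of `n`. -/
def sp (p n : ℕ) : ℕ := (Nat.digits p n).sum

open Nat

lemma padicValNat_factorial_add_factorial_le (p : ℕ) [Fact p.Prime] (a b : ℕ) :
    padicValNat p a ! + padicValNat p b ! ≤ padicValNat p (a + b)! := by
  rw [← padicValNat.mul (factorial_ne_zero a) (factorial_ne_zero b)]
  exact (padicValNat_dvd_iff_le (factorial_ne_zero _)).mp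
    (pow_padicValNat_dvd.trans (factorial_mul_factorial_dvd_factorial_add a b))

lemma sp_add_le (p : ℕ) [Fact p.Prime] (a b : ℕ) : sp p (a + b) ≤ sp p a + sp p b := by
  have hval := Nat.mul_le_mul_left (p - 1) (padicValNat_factorial_add_factorial_le p a b)
  rw [Nat.mul_add, sub_one_mul_padicValNat_factorial, sub_one_mul_padicValNat_factorial,
    sub_one_mul_padicValNat_factorial] at hval
  have := digit_sum_le p a
  have := digit_sum_le p b
  have := digit_sum_le p (a + b)
  unfold sp
  omega

lemma sp_add_pow_mul {b n r : ℕ} (hb : 1 < b) (hr : r < b ^ n) (q : ℕ) :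
    sp b (r + b ^ n * q) = sp b r + sp b q := by
  rcases Nat.eq_zero_or_pos q with rfl | hq
  · simp [sp]
  have hlen : (b.digits r).length ≤ n := (digits_length_le_iff hb r).mpr hr
  have hdigits := digits_append_zeroes_append_digits (k := n - (b.digits r).length) (n := r) hb hq
  rw [Nat.add_sub_cancel' hlen] at hdigits
  simp [sp, ← hdigits]

lemma add_mul_modEq_add (r q : ℕ) {m : ℕ} (hm : 1 ≤ m) : r + m * q ≡ r + q [MOD m - 1] := by
  have hm1 : m ≡ 1 [MOD m - 1] := ((modEq_iff_dvd' hm).mpr dvd_rfl).symm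
  simpa using (hm1.mul_right q).add_left r

lemma Nat.ModEq.eq_of_mem_Icc {m a b : ℕ} (h : a ≡ b [MOD m]) (ha : a ∈ Set.Icc 1 m)
    (hb : b ∈ Set.Icc 1 m) : a = b := by
  obtain ⟨ha1, ham⟩ := ha
  obtain ⟨hb1, hbm⟩ := hb
  have hpred : a - 1 ≡ b - 1 [MOD m] :=
    Nat.ModEq.add_right_cancel' 1 (by rwa [Nat.sub_add_cancel ha1, Nat.sub_add_cancel hb1])
  have := hpred.eq_of_lt_of_lt (by omega) (by omega)
  omega

theorem stmt_0_general (p : ℕ) (hp : p.Prime) (n : ℕ)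
    (u ub : ℕ) (hu : 0 < u) (h1 : 1 ≤ ub) (h2 : ub ≤ p ^ n - 1)
    (hcong : u ≡ ub [MOD p ^ n - 1]) :
    sp p ub ≤ sp p u := by
  have := Fact.mk hp
  induction u using Nat.strong_induction_on with
  | _ u ih =>
    obtain hsmall | hlarge := lt_or_ge u (p ^ n)
    · rw [hcong.eq_of_mem_Icc ⟨hu, by omega⟩ ⟨h1, h2⟩]
    obtain ⟨q, r, hr, rfl⟩ : ∃ q r, r < p ^ n ∧ u = r + p ^ n * q :=
      ⟨u / p ^ n, u % p ^ n, mod_lt _ (pow_pos hp.pos n), (mod_add_div u _).symm⟩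
    have hq : 0 < q := Nat.pos_of_ne_zero (by rintro rfl; omega)
    have hfold : r + q < r + p ^ n * q := by
      have : 2 * q ≤ p ^ n * q := Nat.mul_le_mul_right q (by omega)
      omega
    calc sp p ub ≤ sp p (r + q) :=
          ih _ hfold (by omega) ((add_mul_modEq_add r q (by omega)).symm.trans hcong)
      _ ≤ sp p r + sp p q := sp_add_le p r q
      _ = sp p (r + p ^ n * q) := (sp_add_pow_mul hp.one_lt hr q).symm

theorem stmt_0 (p : ℕ) (hp : p.Prime) (n : ℕ) (hn : 0 < n)
    (u ub : ℕ) (hu : 0 < u) (h1 : 1 ≤ ub) (h2 : ub ≤ p ^ n - 1)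
    (hcong : u ≡ ub [MOD p ^ n - 1]) :
    sp p ub ≤ sp p u :=
  stmt_0_general p hp n u ub hu h1 h2 hcong
end

section
/- Let n be a nonnegative integer with base-p expansion n = n₀ + p·n₁ + ⋯ + p^t·n_t where 0 ≤ nᵢ ≤ p − 1. Then n! ≡ (−p)^a · n₀!·n₁!·⋯·n_{t-1}! · n_t! (mod p^{a+1}), where a = (n − s_p(n))/(p − 1). (Here the quantity a is a nonnegative integer since n ≡ s_p(n) mod p−1.) -/
/-!
Splitting off the multiples of `p` gives `n! = p^⌊n/p⌋ · ⌊n/p⌋! · W(n)`, where `W(n)` is the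
product of the `k ≤ n` prime to `p`. By Wilson's theorem every complete block of `p` consecutive
integers contributes `(p-1)! ≡ -1`, so `W(n) ≡ (-1)^⌊n/p⌋ · n₀! (mod p)`. Since the digits of
`⌊n/p⌋` are `n₁, …, n_t` and `v_p(n!) = ⌊n/p⌋ + v_p(⌊n/p⌋!)`, induction shows that the `p`-free
part of `n!` is `≡ (-1)^{v_p(n!)} · n₀! ⋯ n_t! (mod p)`. Multiplying by `p^{v_p(n!)}` gives the
congruence modulo `p^{v_p(n!)+1}`, and Legendre's formula says `v_p(n!) = a`.
-/

namespace Nat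

def coprimeFactorial (p n : ℕ) : ℕ := ∏ k ∈ Finset.range n, if p ∣ k + 1 then 1 else k + 1

theorem factorial_eq_pow_mul_factorial_mul_coprimeFactorial (p n : ℕ) :
    n ! = p ^ (n / p) * (n / p)! * coprimeFactorial p n := by
  induction n with
  | zero => simp [coprimeFactorial]
  | succ n ih =>
    rw [coprimeFactorial, Finset.prod_range_succ, ← coprimeFactorial, factorial_succ, ih]
    by_cases h : p ∣ n + 1
    · have hn : p * (n / p + 1) = n + 1 := by
        simpa only [Nat.succ_div, if_pos h] using Nat.mul_div_cancel' h
      rw [if_pos h, Nat.succ_div, if_pos h, ← hn, factorial_succ]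
      ring
    · rw [if_neg h, Nat.succ_div, if_neg h, add_zero]
      ring

theorem Prime.not_dvd_coprimeFactorial {p : ℕ} (hp : p.Prime) (n : ℕ) :
    ¬ p ∣ coprimeFactorial p n := by
  rw [coprimeFactorial, _root_.Prime.dvd_finsetProd_iff hp.prime]
  rintro ⟨k, -, hk⟩
  split_ifs at hk with h
  exacts [hp.not_dvd_one hk, h hk]

theorem ordCompl_factorial {p : ℕ} (hp : p.Prime) (n : ℕ) :
    ordCompl[p] n ! = ordCompl[p] (n / p)! * coprimeFactorial p n := by
  rw [factorial_eq_pow_mul_factorial_mul_coprimeFactorial p n, mul_assoc,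
    ordCompl_self_pow_mul _ _ hp, ordCompl_mul,
    (ordCompl_eq_self_iff_zero_or_not_dvd _ hp).mpr (.inr (hp.not_dvd_coprimeFactorial n))]

theorem cast_coprimeFactorial_mul_add {p : ℕ} (q : ℕ) {r : ℕ} (hr : r < p) :
    (coprimeFactorial p (p * q + r) : ZMod p) = coprimeFactorial p (p * q) * r ! := by
  rw [coprimeFactorial, Finset.prod_range_add, ← coprimeFactorial, Nat.cast_mul,
    ← Finset.prod_range_add_one_eq_factorial, Nat.cast_prod, Nat.cast_prod]
  congr 1
  refine Finset.prod_congr rfl fun i hi => ?_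
  have hi : i + 1 < p := by simp only [Finset.mem_range] at hi; omega
  rw [if_neg]
  · simp
  · rw [add_assoc, Nat.dvd_add_right (dvd_mul_right p q)]
    exact not_dvd_of_pos_of_lt i.succ_pos hi

theorem coprimeFactorial_mul_succ {p : ℕ} (hp : 0 < p) (q : ℕ) :
    coprimeFactorial p (p * (q + 1)) = coprimeFactorial p (p * q + (p - 1)) := by
  rw [show p * (q + 1) = p * q + (p - 1) + 1 by rw [mul_add]; omega, coprimeFactorial,
    Finset.prod_range_succ, ← coprimeFactorial, if_pos, mul_one]
  exact ⟨q + 1, by rw [mul_add]; omega⟩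

theorem cast_coprimeFactorial_mul {p : ℕ} [hp : Fact p.Prime] (q : ℕ) :
    (coprimeFactorial p (p * q) : ZMod p) = (-1) ^ q := by
  induction q with
  | zero => simp [coprimeFactorial]
  | succ q ih =>
    rw [coprimeFactorial_mul_succ hp.out.pos,
      cast_coprimeFactorial_mul_add q (Nat.sub_lt hp.out.pos one_pos), ih,
      ZMod.wilsons_lemma, pow_succ, mul_neg_one]

theorem cast_coprimeFactorial {p : ℕ} [hp : Fact p.Prime] (n : ℕ) :
    (coprimeFactorial p n : ZMod p) = (-1) ^ (n / p) * (n % p)! := by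
  conv_lhs => rw [← div_add_mod n p]
  rw [cast_coprimeFactorial_mul_add _ (mod_lt n hp.out.pos), cast_coprimeFactorial_mul]

theorem padicValNat_factorial_eq_div_add {p : ℕ} [Fact p.Prime] (n : ℕ) :
    padicValNat p n ! = n / p + padicValNat p (n / p)! := by
  rw [← padicValNat_mul_div_factorial, padicValNat_factorial_mul, add_comm]

theorem cast_ordCompl_factorial {p : ℕ} [hp : Fact p.Prime] (n : ℕ) :
    ((ordCompl[p] n ! : ℕ) : ZMod p) =
      (-1) ^ padicValNat p n ! * ((digits p n).map fun d => (d ! : ZMod p)).prod := by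
  induction n using Nat.strong_induction_on with
  | _ n ih =>
  rcases Nat.eq_zero_or_pos n with rfl | hn
  · simp
  rw [ordCompl_factorial hp.out, Nat.cast_mul, ih _ (div_lt_self hn hp.out.one_lt),
    cast_coprimeFactorial, digits_def' hp.out.one_lt hn, padicValNat_factorial_eq_div_add n,
    List.map_cons, List.prod_cons, pow_add]
  ring

end Nat

/-- Anton's congruence: `n! ≡ (−p)^a · n₀!⋯n_t!  (mod p^{a+1})`, where the `nᵢ` are the
base-`p` digits of `n` and `a = (n − s_p(n))/(p−1)`. -/
theorem stmt_4 (p : ℕ) (hp : p.Prime) (n : ℕ) (a : ℕ) (ha : a = (n - sp p n) / (p - 1)) :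
    (Nat.factorial n : ℤ) ≡ (-(p : ℤ)) ^ a * ((Nat.digits p n).map fun d => (Nat.factorial d : ℤ)).prod
      [ZMOD (p : ℤ) ^ (a + 1)] := by
  have : Fact p.Prime := ⟨hp⟩
  obtain rfl : a = padicValNat p n.factorial := by
    rw [ha, sp, ← sub_one_mul_padicValNat_factorial,
      Nat.mul_div_cancel_left _ (Nat.sub_pos_of_lt hp.one_lt)]
  have hsplit :
      (n.factorial : ℤ) = p ^ padicValNat p n.factorial * (ordCompl[p] n.factorial : ℕ) := by
    rw [← Nat.factorization_def _ hp]
    exact_mod_cast (Nat.ordProj_mul_ordCompl_eq_self _ p).symm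
  have hfree : ((ordCompl[p] n.factorial : ℕ) : ℤ) ≡ (-1) ^ padicValNat p n.factorial *
      ((Nat.digits p n).map fun d => (d.factorial : ℤ)).prod [ZMOD p] := by
    rw [← ZMod.intCast_eq_intCast_iff, Int.cast_mul, Int.cast_pow, Int.cast_neg, Int.cast_one,
      Int.cast_natCast, Nat.cast_ordCompl_factorial, Int.cast_list_prod, List.map_map]
    simp only [Function.comp_def, Int.cast_natCast]
  rw [hsplit, neg_eq_neg_one_mul, mul_pow, mul_assoc, mul_left_comm, pow_succ]
  exact hfree.mul_left'
end

section
/- Let p be a prime and d₀ < p a positive integer, D = {1, 2, ..., d₀}. Then δ_{D,p} = (1/(p−1))·⌈(p−1)/d₀⌉. -/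
/-- `sD p n D` is `s_{D,p}(n)`: the minimum of `∑_{d∈D} s_p(u_d)` over tuples
`(u_d)_{d∈D}` with `0 ≤ u_d ≤ p^n − 1`, `∑ u_d·d ≡ 0 (mod p^n − 1)` and `∑ u_d·d > 0`. -/
noncomputable def sD (p n : ℕ) (D : Finset ℕ) : ℕ :=
  sInf {s : ℕ | ∃ u : ℕ → ℕ, (∀ d ∈ D, u d ≤ p ^ n - 1) ∧
    (p ^ n - 1) ∣ (∑ d ∈ D, u d * d) ∧ 0 < ∑ d ∈ D, u d * d ∧ s = ∑ d ∈ D, sp p (u d)}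

/-!
Write each `u_d` with `m` base-`p` digits `a_{d,i}` and put `B_i = ∑_d d·a_{d,i}`,
`A_i = ∑_d a_{d,i}`. Then `B_i ≤ d₀·A_i`, `∑_i A_i = ∑_d s_p(u_d)`, and
`∑_i B_i p^i = ∑_d d·u_d` is a positive multiple of `p^m − 1`. Carrying cyclically (take `p` from
some `B_i ≥ p` and add `1` at position `i + 1 mod m`, allowed since `p^m ≡ 1`) and moving one
unit of `A` along keeps all of this, because `d₀ ≤ p`, and strictly lowers `∑_i B_i`. When no
carry is possible, `0 < ∑_i B_i p^i ≤ p^m − 1` forces every `B_i = p − 1`, hence every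
`A_i ≥ ⌈(p−1)/d₀⌉`. So `s_{D,p}(m) ≥ m·⌈(p−1)/d₀⌉`, with equality at `m = 1` by writing `p − 1`
as a sum of `⌈(p−1)/d₀⌉` elements of `D`.
-/

open Finset

theorem sum_div_pow_mod_mul_pow (p n m : ℕ) :
    ∑ i ∈ range m, n / p ^ i % p * p ^ i = n % p ^ m := by
  induction m with
  | zero => simp [Nat.mod_one]
  | succ m ih => rw [sum_range_succ, ih, Nat.mod_pow_succ, mul_comm]

theorem sp_eq_sum_div_pow_mod {p : ℕ} (hp : 2 ≤ p) {m n : ℕ} (hn : n < p ^ m) :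
    sp p n = ∑ i ∈ range m, n / p ^ i % p := by
  induction m generalizing n with
  | zero => simp_all [sp]
  | succ m ih =>
    rcases Nat.eq_zero_or_pos n with rfl | hn0
    · simp [sp]
    have hdiv : n / p < p ^ m := Nat.div_lt_of_lt_mul (by rwa [← pow_succ'])
    rw [sum_range_succ', sp, Nat.digits_def' hp hn0, List.sum_cons, ← sp, ih hdiv]
    simp only [pow_succ', ← Nat.div_div_eq_div_mul, pow_zero, Nat.div_one]
    ring

theorem pow_modEq_pow_mod {p : ℕ} (hp : 0 < p) (m k : ℕ) :
    p ^ k ≡ p ^ (k % m) [MOD p ^ m - 1] := by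
  have hpm : p ^ m ≡ 1 [MOD p ^ m - 1] := Nat.modEq_sub (Nat.one_le_pow _ _ hp)
  calc p ^ k = (p ^ m) ^ (k / m) * p ^ (k % m) := by rw [← pow_mul, ← pow_add, Nat.div_add_mod]
    _ ≡ 1 ^ (k / m) * p ^ (k % m) [MOD p ^ m - 1] := (hpm.pow _).mul_right _
    _ = p ^ (k % m) := by rw [one_pow, one_mul]

def carry (a i j : ℕ) (f : ℕ → ℕ) (k : ℕ) : ℕ :=
  f k + (if k = j then 1 else 0) - (if k = i then a else 0)

theorem carry_add_ite {a i j : ℕ} {f : ℕ → ℕ} (h : a ≤ f i) (k : ℕ) :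
    carry a i j f k + (if k = i then a else 0) = f k + (if k = j then 1 else 0) := by
  unfold carry
  split_ifs <;> subst_vars <;> omega

theorem sum_carry_mul_add {s : Finset ℕ} {a i j : ℕ} {f : ℕ → ℕ} (hi : i ∈ s) (hj : j ∈ s)
    (h : a ≤ f i) (w : ℕ → ℕ) :
    ∑ k ∈ s, carry a i j f k * w k + a * w i = ∑ k ∈ s, f k * w k + w j := by
  have hwi : ∑ k ∈ s, (if k = i then a else 0) * w k = a * w i := by simp [ite_mul, hi]
  have hwj : ∑ k ∈ s, (if k = j then 1 else 0) * w k = w j := by simp [ite_mul, hj]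
  rw [← hwi, ← hwj, ← sum_add_distrib, ← sum_add_distrib]
  exact sum_congr rfl fun k _ => by rw [← add_mul, ← add_mul, carry_add_ite h]

theorem eq_sub_one_of_dvd_sum_mul_pow {p m : ℕ} (hp : 0 < p) {B : ℕ → ℕ}
    (hlt : ∀ i ∈ range m, B i < p) (hdvd : p ^ m - 1 ∣ ∑ i ∈ range m, B i * p ^ i)
    (hB : ∃ i ∈ range m, B i ≠ 0) : ∀ i ∈ range m, B i = p - 1 := by
  by_contra! hne
  have hpos : 0 < ∑ i ∈ range m, B i * p ^ i := by
    obtain ⟨i, hi, hBi⟩ := hB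
    exact lt_of_lt_of_le (by positivity) (single_le_sum (fun k _ => Nat.zero_le (B k * p ^ k)) hi)
  have hlt' : ∑ i ∈ range m, B i * p ^ i < ∑ i ∈ range m, (p - 1) * p ^ i := by
    refine sum_lt_sum (fun i hi => Nat.mul_le_mul_right _ (Nat.le_sub_one_of_lt (hlt i hi))) ?_
    obtain ⟨i, hi, hBi⟩ := hne
    exact ⟨i, hi, Nat.mul_lt_mul_of_pos_right (by have := hlt i hi; omega) (by positivity)⟩
  have hgeom : ∑ i ∈ range m, (p - 1) * p ^ i + 1 = p ^ m := by
    have h := geom_sum_mul_add (p - 1) m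
    rw [Nat.sub_add_cancel (by omega : 1 ≤ p)] at h
    rw [← h, ← mul_sum, mul_comm]
  have := Nat.le_of_dvd hpos hdvd
  omega

theorem carry_ne_zero_at {a i j : ℕ} {f : ℕ → ℕ} (h : a ≤ f i) : carry a i j f j ≠ 0 := by
  have := carry_add_ite (j := j) h j
  rw [if_pos rfl] at this
  split_ifs at this with hji
  · rw [hji] at this ⊢
    omega
  · omega

theorem carry_le_mul_carry {a i j k d₀ : ℕ} {B A : ℕ → ℕ} (hd₀ : 0 < d₀) (hd₀a : d₀ ≤ a)
    (hBi : a ≤ B i) (hAi : 1 ≤ A i) (hk : B k ≤ d₀ * A k) :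
    carry a i j B k ≤ d₀ * carry 1 i j A k := by
  have hB := carry_add_ite (j := j) hBi k
  have hA := congrArg (d₀ * ·) (carry_add_ite (j := j) hAi k)
  simp only [mul_add] at hA
  split_ifs at hB hA <;> omega

theorem dvd_sum_carry_mul_pow {p m i : ℕ} {B : ℕ → ℕ} (hp : 0 < p) (hm : 0 < m)
    (hi : i ∈ range m) (hBi : p ≤ B i) (hdvd : p ^ m - 1 ∣ ∑ k ∈ range m, B k * p ^ k) :
    p ^ m - 1 ∣ ∑ k ∈ range m, carry p i ((i + 1) % m) B k * p ^ k := by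
  have hval := sum_carry_mul_add hi (mem_range.2 (Nat.mod_lt (i + 1) hm)) hBi (p ^ ·)
  have hcyc : p * p ^ i ≡ p ^ ((i + 1) % m) [MOD p ^ m - 1] := by
    rw [← pow_succ']
    exact pow_modEq_pow_mod hp m (i + 1)
  rw [← Nat.modEq_zero_iff_dvd] at hdvd ⊢
  exact (Nat.ModEq.add_right_cancel hcyc (by rw [hval])).trans hdvd

theorem mul_le_sum_of_dvd_sum_mul_pow {p m d₀ c : ℕ} (hp : 2 ≤ p) (hm : 0 < m) (hd₀ : 0 < d₀)
    (hd₀p : d₀ ≤ p) (hc : ∀ a, p - 1 ≤ d₀ * a → c ≤ a) (B A : ℕ → ℕ)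
    (hdvd : p ^ m - 1 ∣ ∑ i ∈ range m, B i * p ^ i) (hB : ∃ i ∈ range m, B i ≠ 0)
    (hBA : ∀ i ∈ range m, B i ≤ d₀ * A i) : m * c ≤ ∑ i ∈ range m, A i := by
  induction hS : ∑ i ∈ range m, B i using Nat.strong_induction_on generalizing B A with
  | _ S ih =>
  by_cases hdigits : ∀ i ∈ range m, B i < p
  · have hfull := eq_sub_one_of_dvd_sum_mul_pow (by omega) hdigits hdvd hB
    calc m * c = ∑ _ ∈ range m, c := by simp
      _ ≤ ∑ i ∈ range m, A i := sum_le_sum fun i hi => hc _ (hfull i hi ▸ hBA i hi)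
  push Not at hdigits
  obtain ⟨i, hi, hBi⟩ := hdigits
  have hj : (i + 1) % m ∈ range m := mem_range.2 (Nat.mod_lt _ hm)
  have hAi : 1 ≤ A i := Nat.pos_of_ne_zero fun h0 => by
    have := hBA i hi
    rw [h0, mul_zero] at this
    omega
  have hsumB := sum_carry_mul_add hi hj hBi (fun _ => 1)
  have hsumA := sum_carry_mul_add hi hj hAi (fun _ => 1)
  simp only [mul_one] at hsumB hsumA
  calc m * c ≤ ∑ k ∈ range m, carry 1 i ((i + 1) % m) A k :=
        ih _ (by omega) _ _ (dvd_sum_carry_mul_pow (by omega) hm hi hBi hdvd)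
          ⟨_, hj, carry_ne_zero_at hBi⟩
          (fun k hk => carry_le_mul_carry hd₀ hd₀p hBi hAi (hBA k hk)) rfl
    _ = ∑ i ∈ range m, A i := by omega

theorem mul_le_sum_sp {p m d₀ c : ℕ} (hp : 2 ≤ p) (hm : 0 < m) (hd₀ : 0 < d₀) (hd₀p : d₀ ≤ p)
    (hc : ∀ a, p - 1 ≤ d₀ * a → c ≤ a) {D : Finset ℕ} (hD : ∀ d ∈ D, d ≤ d₀) (u : ℕ → ℕ)
    (hu : ∀ d ∈ D, u d ≤ p ^ m - 1) (hdvd : p ^ m - 1 ∣ ∑ d ∈ D, u d * d)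
    (hpos : 0 < ∑ d ∈ D, u d * d) : m * c ≤ ∑ d ∈ D, sp p (u d) := by
  have hlt : ∀ d ∈ D, u d < p ^ m := fun d hd =>
    Nat.lt_of_le_sub_one (Nat.pow_pos (by omega)) (hu d hd)
  set B : ℕ → ℕ := fun i => ∑ d ∈ D, u d / p ^ i % p * d
  set A : ℕ → ℕ := fun i => ∑ d ∈ D, u d / p ^ i % p
  have hval : ∑ i ∈ range m, B i * p ^ i = ∑ d ∈ D, u d * d := by
    simp only [B, sum_mul]
    rw [sum_comm]
    refine sum_congr rfl fun d hd => ?_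
    have hexp := sum_div_pow_mod_mul_pow p (u d) m
    rw [Nat.mod_eq_of_lt (hlt d hd)] at hexp
    calc ∑ i ∈ range m, u d / p ^ i % p * d * p ^ i
        = (∑ i ∈ range m, u d / p ^ i % p * p ^ i) * d := by
          rw [sum_mul]; exact sum_congr rfl fun i _ => by ring
      _ = u d * d := by rw [hexp]
  have hsum : ∑ i ∈ range m, A i = ∑ d ∈ D, sp p (u d) := by
    rw [sum_comm]
    exact sum_congr rfl fun d hd => (sp_eq_sum_div_pow_mod hp (hlt d hd)).symm
  have hB : ∃ i ∈ range m, B i ≠ 0 := by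
    rw [← hval] at hpos
    obtain ⟨i, hi, hBi⟩ := exists_ne_zero_of_sum_ne_zero hpos.ne'
    exact ⟨i, hi, left_ne_zero_of_mul hBi⟩
  have hBA : ∀ i ∈ range m, B i ≤ d₀ * A i := fun i _ => by
    rw [mul_sum]
    exact sum_le_sum fun d hd => by rw [mul_comm]; exact Nat.mul_le_mul_right _ (hD d hd)
  rw [← hsum]
  exact mul_le_sum_of_dvd_sum_mul_pow hp hm hd₀ hd₀p hc B A (hval ▸ hdvd) hB hBA

theorem mul_le_sD {p m d₀ c : ℕ} (hp : 2 ≤ p) (hm : 0 < m) (hd₀ : 0 < d₀) (hd₀p : d₀ ≤ p)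
    (hc : ∀ a, p - 1 ≤ d₀ * a → c ≤ a) {D : Finset ℕ} (hD : ∀ d ∈ D, d ≤ d₀)
    (hD₀ : ∃ d ∈ D, 0 < d) : m * c ≤ sD p m D := by
  refine le_csInf ⟨_, fun _ => p ^ m - 1, fun _ _ => le_rfl, ?_, ?_, rfl⟩ ?_
  · exact dvd_sum fun d _ => dvd_mul_right _ _
  · obtain ⟨d, hd, hd0⟩ := hD₀
    have hpm : 1 < p ^ m := Nat.one_lt_pow hm.ne' (by omega)
    exact lt_of_lt_of_le (Nat.mul_pos (by omega) hd0)
      (single_le_sum (fun k _ => Nat.zero_le ((p ^ m - 1) * k)) hd)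
  · rintro _ ⟨u, hu, hdvd, hpos, rfl⟩
    exact mul_le_sum_sp hp hm hd₀ hd₀p hc hD u hu hdvd hpos

theorem sp_of_lt {p n : ℕ} (hp : 2 ≤ p) (hn : n < p) : sp p n = n := by
  rw [sp_eq_sum_div_pow_mod hp (m := 1) (by simpa using hn)]
  simp [Nat.mod_eq_of_lt hn]

theorem sD_one_Icc_le {p d₀ c : ℕ} (hp : 2 ≤ p) (hc : ∀ a, c ≤ a ↔ p - 1 ≤ d₀ * a) :
    sD p 1 (Icc 1 d₀) ≤ c := by
  have hc₁ : p - 1 ≤ d₀ * c := (hc c).1 le_rfl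
  have hd₀ : 0 < d₀ := Nat.pos_of_ne_zero fun h => by simp [h] at hc₁; omega
  have hc₀ : c ≠ 0 := by rintro rfl; simp at hc₁; omega
  obtain ⟨k, rfl⟩ := Nat.exists_eq_add_one_of_ne_zero hc₀
  have hk : d₀ * k < p - 1 := by
    by_contra! h
    have := (hc k).2 h
    omega
  have hcp : k + 1 ≤ p - 1 := (hc _).2 (Nat.le_mul_of_pos_left _ hd₀)
  -- `p − 1 = k·d₀ + r` with `1 ≤ r ≤ d₀`: take `k` copies of `d₀` and one `r`.
  set r := p - 1 - d₀ * k
  have hr : r ∈ Icc 1 d₀ := mem_Icc.2 ⟨by omega, by rw [mul_add] at hc₁; omega⟩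
  have hd₀mem : d₀ ∈ Icc 1 d₀ := mem_Icc.2 ⟨hd₀, le_rfl⟩
  set u : ℕ → ℕ := fun d => (if d = d₀ then k else 0) + if d = r then 1 else 0
  have hu : ∀ d, u d < p := fun d => by simp only [u]; split_ifs <;> omega
  have hval : ∑ d ∈ Icc 1 d₀, u d * d = p - 1 := by
    simp only [u, add_mul, ite_mul, zero_mul, one_mul, sum_add_distrib, sum_ite_eq', hr, hd₀mem,
      if_true]
    have := Nat.mul_comm k d₀
    omega
  refine Nat.sInf_le ⟨u, fun d _ => ?_, ?_, ?_, ?_⟩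
  · rw [pow_one]; exact Nat.le_sub_one_of_lt (hu d)
  · rw [hval, pow_one]
  · rw [hval]; omega
  · rw [sum_congr rfl fun d _ => sp_of_lt hp (hu d)]
    simp [u, sum_add_distrib, hr, hd₀mem]

theorem natCeil_sub_one_div_le_iff {p d₀ : ℕ} (hp : 1 ≤ p) (hd₀ : 0 < d₀) (a : ℕ) :
    ⌈((p : ℚ) - 1) / d₀⌉₊ ≤ a ↔ p - 1 ≤ d₀ * a := by
  rw [Nat.ceil_le, div_le_iff₀ (by positivity), ← Nat.cast_one, ← Nat.cast_sub hp, mul_comm]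
  norm_cast

/-- For `d₀ < p` and `D = {1,...,d₀}`, `δ_{D,p} = (1/(p−1))·⌈(p−1)/d₀⌉`; equivalently the
minimum of `s_{D,p}(m)/m` over `m ≥ 1` is `⌈(p−1)/d₀⌉`. -/
theorem stmt_12 (p : ℕ) (hp : p.Prime) (d₀ : ℕ) (hd₀ : 0 < d₀) (hlt : d₀ < p)
    (D : Finset ℕ) (hD : D = Finset.Icc 1 d₀) :
    IsLeast {x : ℚ | ∃ m : ℕ, 1 ≤ m ∧ x = (sD p m D : ℚ) / m}
      ((⌈((p : ℚ) - 1) / (d₀ : ℚ)⌉ : ℤ) : ℚ) := by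
  subst hD
  have hp₂ := hp.two_le
  have hc := natCeil_sub_one_div_le_iff hp.one_le hd₀
  have hlow : ∀ m, 1 ≤ m → m * ⌈((p : ℚ) - 1) / d₀⌉₊ ≤ sD p m (Icc 1 d₀) := fun m hm =>
    mul_le_sD hp₂ hm hd₀ hlt.le (fun a => (hc a).2) (fun d hd => (mem_Icc.1 hd).2)
      ⟨1, mem_Icc.2 ⟨le_rfl, hd₀⟩, one_pos⟩
  have hone : sD p 1 (Icc 1 d₀) = ⌈((p : ℚ) - 1) / d₀⌉₊ :=
    le_antisymm (sD_one_Icc_le hp₂ hc) (by simpa using hlow 1 le_rfl)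
  rw [← natCast_ceil_eq_intCast_ceil (by have : (1 : ℚ) ≤ p := mod_cast hp.one_le; positivity)]
  refine ⟨⟨1, le_rfl, by simp [hone]⟩, ?_⟩
  rintro _ ⟨m, hm, rfl⟩
  rw [le_div_iff₀ (by exact_mod_cast hm), mul_comm]
  exact_mod_cast hlow m hm
end

section
/- Let p = 3, n ≥ 1, and D = {1 ≤ i ≤ 3^{n+1} − 2 : gcd(3,i) = 1}. The elements of D of base-3 digit sum 2n+1 (which is the 3-weight of D, i.e. the maximum digit sum among elements of D) are exactly d_i = 3^{n+1} − 3^i − 1 for 0 ≤ i ≤ n. -/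
theorem sp_eq_mod_add_sp_div {p : ℕ} (hp : 1 < p) (n : ℕ) : sp p n = n % p + sp p (n / p) := by
  rcases Nat.eq_zero_or_pos n with rfl | hn
  · simp [sp]
  · simp [sp, Nat.digits_def' hp hn]

theorem sp_pos {p : ℕ} (hp : 1 < p) {n : ℕ} (hn : n ≠ 0) : 0 < sp p n := by
  induction n using Nat.strong_induction_on with
  | _ n ih =>
    rw [sp_eq_mod_add_sp_div hp]
    rcases Nat.eq_zero_or_pos (n % p) with hr | hr
    · have hq : n / p ≠ 0 := fun h => hn (by rw [← Nat.div_add_mod n p, h, hr]; simp)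
      have := ih (n / p) (Nat.div_lt_self (Nat.pos_of_ne_zero hn) hp) hq
      omega
    · omega

theorem sp_pow {p : ℕ} (hp : 1 < p) (i : ℕ) : sp p (p ^ i) = 1 := by
  simpa [sp, Nat.digits_of_lt p 1 one_ne_zero hp] using
    congrArg List.sum (Nat.digits_base_pow_mul (k := i) hp Nat.one_pos)

theorem sp_eq_one_iff {p : ℕ} (hp : 1 < p) {n : ℕ} : sp p n = 1 ↔ ∃ i, n = p ^ i := by
  refine ⟨fun h => ?_, fun ⟨i, hi⟩ => hi ▸ sp_pow hp i⟩
  induction n using Nat.strong_induction_on with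
  | _ n ih =>
    have hn : n ≠ 0 := by rintro rfl; simp [sp] at h
    rw [sp_eq_mod_add_sp_div hp] at h
    rcases Nat.eq_zero_or_pos (n % p) with hr | hr
    · obtain ⟨i, hi⟩ := ih (n / p) (Nat.div_lt_self (Nat.pos_of_ne_zero hn) hp) (by omega)
      exact ⟨i + 1, by rw [← Nat.div_add_mod n p, hi, hr, pow_succ']; rfl⟩
    · have hq : n / p = 0 := by
        by_contra hq
        have := sp_pos hp hq
        omega
      exact ⟨0, by rw [pow_zero, ← Nat.div_add_mod n p, hq]; omega⟩

theorem sp_add_sp_of_add_add_one_eq_pow {p : ℕ} (hp : 1 < p) :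
    ∀ {m d e : ℕ}, d + e + 1 = p ^ m → sp p d + sp p e = (p - 1) * m
  | 0, d, e, h => by
    obtain ⟨rfl, rfl⟩ : d = 0 ∧ e = 0 := by rw [pow_zero] at h; omega
    simp [sp]
  | m + 1, d, e, h => by
    have hsplit : p * (d / p + e / p) + (d % p + e % p + 1) = p * p ^ m := by
      rw [← pow_succ', ← h]; nlinarith [Nat.div_add_mod d p, Nat.div_add_mod e p]
    -- `d % p + e % p + 1` is a multiple of `p` lying in `[1, 2p)`.
    have hdigits : d % p + e % p + 1 = p := by
      obtain ⟨t, ht⟩ : p ∣ d % p + e % p + 1 :=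
        (Nat.dvd_add_right (Nat.dvd_mul_right _ _)).mp (hsplit ▸ Nat.dvd_mul_right _ _)
      have := Nat.mod_lt d (by omega : 0 < p)
      have := Nat.mod_lt e (by omega : 0 < p)
      rcases t with _ | _ | t
      · omega
      · omega
      · nlinarith
    have hrest : d / p + e / p + 1 = p ^ m := by
      rw [hdigits] at hsplit
      exact Nat.eq_of_mul_eq_mul_left (by omega : 0 < p) (by rw [mul_add, mul_one]; exact hsplit)
    rw [sp_eq_mod_add_sp_div hp d, sp_eq_mod_add_sp_div hp e, mul_add_one,
      ← sp_add_sp_of_add_add_one_eq_pow hp hrest]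
    omega

theorem sp_add_one_le_of_add_one_lt_pow {p m d : ℕ} (hp : 1 < p) (h : d + 1 < p ^ m) :
    sp p d + 1 ≤ (p - 1) * m := by
  have hsum := sp_add_sp_of_add_add_one_eq_pow hp (m := m) (d := d) (e := p ^ m - 1 - d)
    (by omega)
  have := sp_pos hp (n := p ^ m - 1 - d) (by omega)
  omega

theorem sp_add_one_eq_iff {p m d : ℕ} (hp : 1 < p) (h : d < p ^ m) :
    sp p d + 1 = (p - 1) * m ↔ ∃ i < m, d = p ^ m - p ^ i - 1 := by
  have hsum := sp_add_sp_of_add_add_one_eq_pow hp (m := m) (d := d) (e := p ^ m - 1 - d)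
    (by omega)
  rw [show sp p d + 1 = (p - 1) * m ↔ sp p (p ^ m - 1 - d) = 1 by omega, sp_eq_one_iff hp]
  constructor
  · rintro ⟨i, hi⟩
    have hlt : p ^ i < p ^ m := by omega
    exact ⟨i, (Nat.pow_lt_pow_iff_right hp).mp hlt, by omega⟩
  · rintro ⟨i, hi, rfl⟩
    have := Nat.pow_lt_pow_right hp hi
    have := pow_pos (by omega : 0 < p) i
    refine ⟨i, ?_⟩
    omega

theorem stmt_18_general (n : ℕ)
    (D : Finset ℕ)
    (hD : D = (Finset.Icc 1 (3 ^ (n + 1) - 2)).filter fun i => Nat.gcd 3 i = 1) :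
    (∀ d ∈ D, sp 3 d ≤ 2 * n + 1) ∧
    (∀ d ∈ D, sp 3 d = 2 * n + 1 ↔ ∃ i ≤ n, d = 3 ^ (n + 1) - 3 ^ i - 1) := by
  have hrange : ∀ d ∈ D, d + 1 < 3 ^ (n + 1) := by
    intro d hd
    rw [hD, Finset.mem_filter, Finset.mem_Icc] at hd
    have : 1 < 3 ^ (n + 1) := Nat.one_lt_pow (by omega) (by norm_num)
    omega
  refine ⟨fun d hd => ?_, fun d hd => ?_⟩
  · have := sp_add_one_le_of_add_one_lt_pow (by norm_num) (hrange d hd)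
    omega
  · rw [show sp 3 d = 2 * n + 1 ↔ sp 3 d + 1 = (3 - 1) * (n + 1) by omega,
      sp_add_one_eq_iff (by norm_num) (by linarith [hrange d hd])]
    simp only [Nat.lt_succ_iff]

/-- For `D = {1 ≤ i ≤ 3^{n+1} − 2 : gcd(3,i) = 1}`, the maximal base-3 digit sum of an
element of `D` is `2n+1`, and the elements achieving it are exactly
`d_i = 3^{n+1} − 3^i − 1` for `0 ≤ i ≤ n`. -/
theorem stmt_18 (n : ℕ) (hn : 0 < n)
    (D : Finset ℕ)
    (hD : D = (Finset.Icc 1 (3 ^ (n + 1) - 2)).filter fun i => Nat.gcd 3 i = 1) :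
    (∀ d ∈ D, sp 3 d ≤ 2 * n + 1) ∧
    (∀ d ∈ D, sp 3 d = 2 * n + 1 ↔ ∃ i ≤ n, d = 3 ^ (n + 1) - 3 ^ i - 1) :=
  stmt_18_general n D hD
end
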